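/- Let A, B₁, B₂, C be real matrices of sizes n×n, n×N, n×m, p×n respectively, let γ > 0, let Q be a symmetric positive definite n×n matrix and L an N×n matrix, and suppose the block matrix M̄ = [[QAᵀ − LᵀB₁ᵀ + AQ − B₁L, B₂, QCᵀ], [B₂ᵀ, −γI, 0], [CQ, 0, −γI]] is negative definite. Set K = LQ⁻¹. Then for every differentiable x : ℝ → ℝⁿ with continuous derivative and every continuous d : ℝ → ℝᵐ satisfying x′(t) = (A − B₁K)·x(t) + B₂·d(t) for all t and x(0) = 0, one has ∫₀ᵀ ‖C·x(t)‖² dt ≤ γ² ∫₀ᵀ ‖d(t)‖² dt for every T ≥ 0, where ‖·‖ is the Euclidean norm. -/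

import Mathlib

open Matrix

/-!
With `P = Q⁻¹`, the storage function `V(x) = xᵀ P x` obeys the dissipation inequality
`V̇ ≤ γ ‖d‖² - γ⁻¹ ‖C x‖²` along closed-loop trajectories: substituting `L = K Q`, the left-hand
side minus the right-hand side is the quadratic form of the LMI matrix at `(P x, d, γ⁻¹ C x)`,
which is nonpositive. Integrating over `[0, T]` and using `V(x(0)) = 0 ≤ V(x(T))` gives
`γ⁻¹ ∫ ‖C x‖² ≤ γ ∫ ‖d‖²`.
-/

section Derivatives

variable {𝕜 ι κ : Type*} [NontriviallyNormedField 𝕜] [Fintype ι]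
  {f g : 𝕜 → ι → 𝕜} {f' g' : ι → 𝕜} {t : 𝕜}

theorem HasDerivAt.dotProduct (hf : HasDerivAt f f' t) (hg : HasDerivAt g g' t) :
    HasDerivAt (fun s => f s ⬝ᵥ g s) (f' ⬝ᵥ g t + f t ⬝ᵥ g') t := by
  unfold _root_.dotProduct
  rw [← Finset.sum_add_distrib]
  exact HasDerivAt.fun_sum fun i _ => (hasDerivAt_pi.1 hf i).mul (hasDerivAt_pi.1 hg i)

theorem HasDerivAt.mulVec (M : Matrix κ ι 𝕜) (hf : HasDerivAt f f' t) :
    HasDerivAt (fun s => M *ᵥ f s) (M *ᵥ f') t :=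
  hasDerivAt_pi.2 fun i =>
    ((hasDerivAt_const t (M i)).dotProduct hf).congr_deriv (by simp; rfl)

theorem HasDerivAt.dotProduct_mulVec_self {P : Matrix ι ι 𝕜} (hP : P.IsSymm)
    (hf : HasDerivAt f f' t) :
    HasDerivAt (fun s => f s ⬝ᵥ P *ᵥ f s) (2 * (P *ᵥ f t ⬝ᵥ f')) t :=
  (hf.dotProduct (hf.mulVec P)).congr_deriv <| by
    nth_rw 2 [← hP.eq]
    rw [dotProduct_transpose_mulVec, dotProduct_comm f', two_mul]

end Derivatives

theorem integral_sq_le_of_dissipation {ι κ ρ : Type*} [Fintype ι] [Fintype κ] [Fintype ρ]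
    {P : Matrix ι ι ℝ} (hP : P.PosSemidef) {C : Matrix ρ ι ℝ} {γ : ℝ} (hγ : 0 < γ)
    {x : ℝ → ι → ℝ} {d : ℝ → κ → ℝ} (hx : Differentiable ℝ x) (hd : Continuous d)
    (hdiss : ∀ t, 2 * (P *ᵥ x t ⬝ᵥ deriv x t) + γ⁻¹ * (C *ᵥ x t ⬝ᵥ C *ᵥ x t) ≤
      γ * (d t ⬝ᵥ d t))
    (hx0 : x 0 = 0) {T : ℝ} (hT : 0 ≤ T) :
    ∫ t in 0..T, C *ᵥ x t ⬝ᵥ C *ᵥ x t ≤ γ ^ 2 * ∫ t in 0..T, d t ⬝ᵥ d t := by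
  have hPt : P.IsSymm := by simpa using hP.isHermitian
  have hV : ∀ t, HasDerivAt (fun s => x s ⬝ᵥ P *ᵥ x s) (2 * (P *ᵥ x t ⬝ᵥ deriv x t)) t :=
    fun t => (hx t).hasDerivAt.dotProduct_mulVec_self hPt
  have hxc := hx.continuous
  have hCx : Continuous fun t => C *ᵥ x t ⬝ᵥ C *ᵥ x t := by fun_prop
  have hdd : Continuous fun t => d t ⬝ᵥ d t := by fun_prop
  have hsupply := intervalIntegral.sub_le_integral_of_hasDeriv_right_of_le hT
    (continuous_iff_continuousAt.2 fun t => (hV t).continuousAt).continuousOn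
    (fun t _ => (hV t).hasDerivWithinAt)
    (φ := fun t => γ * (d t ⬝ᵥ d t) - γ⁻¹ * (C *ᵥ x t ⬝ᵥ C *ᵥ x t))
    (((hdd.const_mul γ).sub (hCx.const_mul γ⁻¹)).integrableOn_Icc)
    (fun t _ => le_sub_iff_add_le.2 (hdiss t))
  have hVT : 0 ≤ x T ⬝ᵥ P *ᵥ x T := by simpa using hP.dotProduct_mulVec_nonneg (x T)
  rw [intervalIntegral.integral_sub ((hdd.const_mul γ).intervalIntegrable 0 T)
      ((hCx.const_mul γ⁻¹).intervalIntegrable 0 T),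
    intervalIntegral.integral_const_mul, intervalIntegral.integral_const_mul, hx0,
    zero_dotProduct, sub_zero] at hsupply
  calc ∫ t in 0..T, C *ᵥ x t ⬝ᵥ C *ᵥ x t
      = γ * (γ⁻¹ * ∫ t in 0..T, C *ᵥ x t ⬝ᵥ C *ᵥ x t) := (mul_inv_cancel_left₀ hγ.ne' _).symm
    _ ≤ γ * (γ * ∫ t in 0..T, d t ⬝ᵥ d t) := mul_le_mul_of_nonneg_left (by linarith) hγ.le
    _ = γ ^ 2 * ∫ t in 0..T, d t ⬝ᵥ d t := by ring

section BoundedReal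

variable {ι κ ρ : Type*} [Fintype ι] [DecidableEq κ] [DecidableEq ρ]

/-- The bounded-real LMI of `ẋ = F x + B d`, `y = C x` in the variable `Q = P⁻¹`. -/
def boundedRealLMI (F Q : Matrix ι ι ℝ) (B : Matrix ι κ ℝ) (C : Matrix ρ ι ℝ) (γ : ℝ) :
    Matrix (ι ⊕ κ ⊕ ρ) (ι ⊕ κ ⊕ ρ) ℝ :=
  fromBlocks (Q * Fᵀ + F * Q) (fromCols B (Q * Cᵀ)) (fromRows Bᵀ (C * Q))
    (fromBlocks (-(γ • 1)) 0 0 (-(γ • 1)))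

theorem sumElim_dotProduct_boundedRealLMI_mulVec [Fintype κ] [Fintype ρ] {F Q : Matrix ι ι ℝ}
    (hQ : Q.IsSymm) (B : Matrix ι κ ℝ) (C : Matrix ρ ι ℝ) (γ : ℝ) {u a : ι → ℝ}
    (hu : Q *ᵥ u = a) (w : κ → ℝ) (z : ρ → ℝ) :
    Sum.elim u (Sum.elim w z) ⬝ᵥ boundedRealLMI F Q B C γ *ᵥ Sum.elim u (Sum.elim w z) =
      2 * (u ⬝ᵥ (F *ᵥ a + B *ᵥ w)) + 2 * (z ⬝ᵥ C *ᵥ a) - γ * (w ⬝ᵥ w) - γ * (z ⬝ᵥ z) := by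
  have hQu : ∀ v, u ⬝ᵥ Q *ᵥ v = a ⬝ᵥ v := fun v => by
    rw [← hQ.eq, dotProduct_transpose_mulVec, hu, dotProduct_comm]
  simp only [boundedRealLMI, fromBlocks_mulVec, Sum.elim_comp_inl, Sum.elim_comp_inr,
    fromCols_mulVec_sumElim, fromRows_mulVec, sumElim_dotProduct_sumElim, add_mulVec,
    ← mulVec_mulVec, hu, hQu, dotProduct_transpose_mulVec, neg_mulVec, smul_mulVec, one_mulVec,
    zero_mulVec, add_zero, zero_add, dotProduct_add, dotProduct_neg, dotProduct_smul, smul_eq_mul]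
  ring

theorem dissipation_of_boundedRealLMI [DecidableEq ι] [Fintype κ] [Fintype ρ]
    {F Q P : Matrix ι ι ℝ} (hQ : Q.IsSymm) (hQP : Q * P = 1)
    {B : Matrix ι κ ℝ} {C : Matrix ρ ι ℝ} {γ : ℝ} (hγ : 0 < γ)
    (hLMI : (-boundedRealLMI F Q B C γ).PosSemidef) (a : ι → ℝ) (w : κ → ℝ) :
    2 * (P *ᵥ a ⬝ᵥ (F *ᵥ a + B *ᵥ w)) + γ⁻¹ * (C *ᵥ a ⬝ᵥ C *ᵥ a) ≤ γ * (w ⬝ᵥ w) := by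
  have hu : Q *ᵥ P *ᵥ a = a := by rw [mulVec_mulVec, hQP, one_mulVec]
  have h := hLMI.dotProduct_mulVec_nonneg (Sum.elim (P *ᵥ a) (Sum.elim w (γ⁻¹ • C *ᵥ a)))
  rw [star_trivial, neg_mulVec, dotProduct_neg,
    sumElim_dotProduct_boundedRealLMI_mulVec hQ B C γ hu] at h
  simp only [dotProduct_smul, smul_dotProduct, smul_eq_mul, mul_inv_cancel_left₀ hγ.ne'] at h
  linarith

theorem boundedRealLMI_sub_mul {ν : Type*} [Fintype ν] {Q : Matrix ι ι ℝ} (hQ : Q.IsSymm)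
    (A : Matrix ι ι ℝ) (B₁ : Matrix ι ν ℝ) (K : Matrix ν ι ℝ) (B : Matrix ι κ ℝ)
    (C : Matrix ρ ι ℝ) (γ : ℝ) :
    boundedRealLMI (A - B₁ * K) Q B C γ =
      fromBlocks (Q * Aᵀ - (K * Q)ᵀ * B₁ᵀ + A * Q - B₁ * (K * Q)) (fromCols B (Q * Cᵀ))
        (fromRows Bᵀ (C * Q)) (fromBlocks (-(γ • 1)) 0 0 (-(γ • 1))) := by
  simp only [boundedRealLMI, transpose_sub, transpose_mul, hQ.eq, Matrix.mul_sub, Matrix.sub_mul,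
    Matrix.mul_assoc]
  congr 1
  abel

end BoundedReal

/-- LMI 1 of the paper: feasibility of the H∞-synthesis LMI yields a state feedback
`K = LQ⁻¹` guaranteeing L₂ gain at most `γ` from the disturbance `d` to the
performance output `Cx` of the linearized closed loop. -/
theorem stmt_9 {n m p N : ℕ}
    (A : Matrix (Fin n) (Fin n) ℝ) (B₁ : Matrix (Fin n) (Fin N) ℝ)
    (B₂ : Matrix (Fin n) (Fin m) ℝ) (C : Matrix (Fin p) (Fin n) ℝ)
    (γ : ℝ) (hγ : 0 < γ)
    (Q : Matrix (Fin n) (Fin n) ℝ) (hQ : Q.PosDef)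
    (L : Matrix (Fin N) (Fin n) ℝ)
    (Mbar : Matrix (Fin n ⊕ (Fin m ⊕ Fin p)) (Fin n ⊕ (Fin m ⊕ Fin p)) ℝ)
    (hMbar : Mbar = Matrix.fromBlocks
      (Q * Aᵀ - Lᵀ * B₁ᵀ + A * Q - B₁ * L)
      (Matrix.fromCols B₂ (Q * Cᵀ))
      (Matrix.fromRows B₂ᵀ (C * Q))
      (Matrix.fromBlocks (-(γ • (1 : Matrix (Fin m) (Fin m) ℝ))) 0 0
        (-(γ • (1 : Matrix (Fin p) (Fin p) ℝ)))))
    (hLMI : (-Mbar).PosDef)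
    (K : Matrix (Fin N) (Fin n) ℝ) (hK : K = L * Q⁻¹) :
    ∀ (x : ℝ → (Fin n → ℝ)) (d : ℝ → (Fin m → ℝ)),
      Differentiable ℝ x → Continuous (deriv x) → Continuous d →
      (∀ t, deriv x t = (A - B₁ * K).mulVec (x t) + B₂.mulVec (d t)) →
      x 0 = 0 →
      ∀ T ≥ (0 : ℝ),
        ∫ t in (0 : ℝ)..T, (∑ i, (C.mulVec (x t)) i ^ 2) ≤
          γ ^ 2 * ∫ t in (0 : ℝ)..T, (∑ i, (d t) i ^ 2) := by
  intro x d hx _ hd hode hx0 T hT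
  have hQsymm : Q.IsSymm := by simpa using hQ.isHermitian
  have hQdet : IsUnit Q.det := (isUnit_iff_isUnit_det Q).1 hQ.isUnit
  have hL : L = K * Q := by rw [hK, nonsing_inv_mul_cancel_right Q L hQdet]
  rw [hL, ← boundedRealLMI_sub_mul hQsymm] at hMbar
  have hdiss (t : ℝ) : 2 * (Q⁻¹ *ᵥ x t ⬝ᵥ deriv x t) + γ⁻¹ * (C *ᵥ x t ⬝ᵥ C *ᵥ x t) ≤
      γ * (d t ⬝ᵥ d t) := by
    rw [hode t]
    exact dissipation_of_boundedRealLMI hQsymm (mul_nonsing_inv Q hQdet) hγ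
      (hMbar ▸ hLMI.posSemidef) (x t) (d t)
  simpa only [dotProduct, sq] using
    integral_sq_le_of_dissipation hQ.inv.posSemidef hγ hx hd hdiss hx0 hT
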